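/- arXiv:1706.09961 — 2 statements merged into one kernel-verified Lean document; each statement's English description precedes it below -/
import Mathlib

section
/- Change of variables in the collision integral: for every unit vector ω ∈ ℝ^d and every measurable function F : ℝ^d × ℝ^d → [0, ∞], one has ∫∫ [ω · (v₂ − v)]₊ F(v*, v₂*) dv dv₂ = ∫∫ [ω · (v₂ − v)]₋ F(v, v₂) dv dv₂, where both integrals are over ℝ^d × ℝ^d with respect to Lebesgue measure, and [r]₊ = max(r,0), [r]₋ = max(−r,0). -/
/-!
In the coordinates `(v, u)` with `u = v₂ - v` the collision transform reads
`(v, u) ↦ (v + ⟪ω, u⟫ ω, R u)`, where `R` is the reflection in the hyperplane `ω^⊥`. This is a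
shear followed by an isometry of the second factor, so the transform preserves Lebesgue measure
on `ℝ^d × ℝ^d`. Since it also flips the sign of `⟪ω, v₂ - v⟫`, substituting it turns the
positive part of that inner product into the negative part.
-/

open scoped RealInnerProductSpace ENNReal
open MeasureTheory

section Shear

variable {G H : Type*} [MeasurableSpace G] [MeasurableSpace H] [AddGroup G] [MeasurableAdd₂ G]
  (μ : Measure G) (ν : Measure H) [SFinite μ] [SFinite ν] [μ.IsAddRightInvariant]

theorem measurePreserving_fst_add_comp_snd {g : H → G} (hg : Measurable g) :
    MeasurePreserving (fun p : G × H => (p.1 + g p.2, p.2)) (μ.prod ν) (μ.prod ν) :=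
  Measure.measurePreserving_swap.comp <|
    (MeasurePreserving.id ν).skew_product (g := fun b a => a + g b)
      (measurable_snd.add (hg.comp measurable_fst))
      (Filter.Eventually.of_forall fun b => (measurePreserving_add_right μ (g b)).map_eq)
    |>.comp Measure.measurePreserving_swap

end Shear

section Collision

variable {E : Type*} [NormedAddCommGroup E] [InnerProductSpace ℝ E]

theorem Submodule.reflection_orthogonal_singleton_apply {ω : E} (hω : ‖ω‖ = 1) (u : E) :
    (ℝ ∙ ω)ᗮ.reflection u = u - (2 * ⟪ω, u⟫) • ω := by
  rw [reflection_orthogonal_apply, reflection_singleton_apply, hω]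
  simp only [RCLike.ofReal_real_eq_id, id, one_pow, div_one]
  module

/-- The hard-sphere collision transform `(v, v₂) ↦ (v*, v₂*)`. -/
def collision (ω : E) (p : E × E) : E × E :=
  (p.1 + ⟪ω, p.2 - p.1⟫ • ω, p.2 - ⟪ω, p.2 - p.1⟫ • ω)

variable {ω : E}

theorem inner_collision_snd_sub_fst (hω : ‖ω‖ = 1) (p : E × E) :
    ⟪ω, (collision ω p).2 - (collision ω p).1⟫ = -⟪ω, p.2 - p.1⟫ := by
  have hωω : ⟪ω, ω⟫ = 1 := by simp [hω]
  simp only [collision, inner_sub_right, inner_add_right, inner_smul_right, hωω]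
  ring

theorem collision_eq_comp (hω : ‖ω‖ = 1) :
    collision ω =
      (fun q : E × E => (q.1, q.2 + q.1)) ∘ (fun q => (q.1, (ℝ ∙ ω)ᗮ.reflection q.2)) ∘
        (fun q => (q.1 + ⟪ω, q.2⟫ • ω, q.2)) ∘ (fun p => (p.1, p.2 - p.1)) := by
  ext1 p
  simp only [collision, Function.comp_apply, Submodule.reflection_orthogonal_singleton_apply hω]
  congr 1
  module

variable [FiniteDimensional ℝ E] [MeasurableSpace E] [BorelSpace E]

theorem measurePreserving_collision (hω : ‖ω‖ = 1) :
    MeasurePreserving (collision ω) (volume : Measure (E × E)) volume := by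
  rw [collision_eq_comp hω]
  exact measurePreserving_prod_add_right volume volume |>.comp <|
    (MeasurePreserving.id volume).prod (LinearIsometryEquiv.measurePreserving _) |>.comp <|
    measurePreserving_fst_add_comp_snd volume volume
      ((continuous_const.inner continuous_id).smul continuous_const).measurable |>.comp <|
    measurePreserving_prod_sub volume volume

end Collision

theorem collision_change_of_variables_general (d : ℕ)
    (ω : EuclideanSpace ℝ (Fin d)) (hω : ‖ω‖ = 1)
    (F : EuclideanSpace ℝ (Fin d) × EuclideanSpace ℝ (Fin d) → ℝ≥0∞)
    (hF : Measurable F) :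
    ∫⁻ p : EuclideanSpace ℝ (Fin d) × EuclideanSpace ℝ (Fin d),
        ENNReal.ofReal (max ⟪ω, p.2 - p.1⟫ 0) *
          F (p.1 + ⟪ω, p.2 - p.1⟫ • ω, p.2 - ⟪ω, p.2 - p.1⟫ • ω)
      = ∫⁻ p : EuclideanSpace ℝ (Fin d) × EuclideanSpace ℝ (Fin d),
        ENNReal.ofReal (max (-⟪ω, p.2 - p.1⟫) 0) * F p := by
  set G := fun p : EuclideanSpace ℝ (Fin d) × EuclideanSpace ℝ (Fin d) =>
    ENNReal.ofReal (max (-⟪ω, p.2 - p.1⟫) 0) * F p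
  have hG : Measurable G :=
    (ENNReal.measurable_ofReal.comp ((continuous_const.inner
      (continuous_snd.sub continuous_fst)).neg.max continuous_const).measurable).mul hF
  calc _ = ∫⁻ p, G (collision ω p) := by
        simp only [G, inner_collision_snd_sub_fst hω, neg_neg]
        rfl
    _ = ∫⁻ p, G p := (measurePreserving_collision hω).lintegral_comp hG

/-- Change of variables in the collision integral: for every unit vector `ω` and every
measurable `F : ℝ^d × ℝ^d → [0, ∞]`,
`∫∫ [ω · (v₂ − v)]₊ F(v*, v₂*) dv dv₂ = ∫∫ [ω · (v₂ − v)]₋ F(v, v₂) dv dv₂`. -/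
theorem collision_change_of_variables (d : ℕ) (hd : 1 ≤ d)
    (ω : EuclideanSpace ℝ (Fin d)) (hω : ‖ω‖ = 1)
    (F : EuclideanSpace ℝ (Fin d) × EuclideanSpace ℝ (Fin d) → ℝ≥0∞)
    (hF : Measurable F) :
    ∫⁻ p : EuclideanSpace ℝ (Fin d) × EuclideanSpace ℝ (Fin d),
        ENNReal.ofReal (max ⟪ω, p.2 - p.1⟫ 0) *
          F (p.1 + ⟪ω, p.2 - p.1⟫ • ω, p.2 - ⟪ω, p.2 - p.1⟫ • ω)
      = ∫⁻ p : EuclideanSpace ℝ (Fin d) × EuclideanSpace ℝ (Fin d),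
        ENNReal.ofReal (max (-⟪ω, p.2 - p.1⟫) 0) * F p :=
  collision_change_of_variables_general d ω hω F hF
end

section
/- Existence of non-uniformly-convergent example data: for every d ≥ 1 there exist a nonnegative Schwartz-class function f₀ on ℝ^d × ℝ^d with ∫ f₀ = 1, a sequence of nonnegative measurable functions f_{0,N} on ℝ^d × ℝ^d with ∫ f_{0,N} = 1 satisfying a uniform Gaussian bound (for some C₀, β₀ > 0, f_{0,N}(x,v) ≤ C₀ e^{−(β₀/2)(|x|²+|v|²)} for all N and all (x,v)), and a decreasing sequence of nonempty open balls B_N ⊆ ℝ^d × ℝ^d with empty intersection and Lebesgue measure at least C (log N)^{−1} for some constant C > 0 and all N ≥ 2, such that ∫ |f_{0,N} − f₀| → 0 as N → ∞ and liminf_{N→∞} inf_{(x,v) ∈ B_N} (f_{0,N}(x,v) − f₀(x,v)) > 0. -/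
/-!
Take for `f₀` a normalised smooth bump and let `f_{0,N}` move the fraction `(1 + log N)⁻¹` of
its mass onto a plateau of fixed height `|B₁|⁻¹` over a ball `B_N` of volume
`|B₁| / (1 + log N)`. Then `‖f_{0,N} - f₀‖₁ ≤ 2 (1 + log N)⁻¹ → 0`, while on `B_N` the
difference stays above `|B₁|⁻¹ - O((log N)⁻¹)`. The balls `B(r_N u, r_N)` with `‖u‖ = 1` and
`r_N ↓ 0` all touch the origin from the same side, so they are nested, and their intersection
is empty because none of them contains the origin.
-/

open MeasureTheory Filter Metric Module Topology

noncomputable def invOneAddLog (N : ℕ) : ℝ := (1 + Real.log N)⁻¹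

lemma one_le_one_add_log_natCast (N : ℕ) : 1 ≤ 1 + Real.log N :=
  le_add_of_nonneg_right (Real.log_natCast_nonneg N)

lemma invOneAddLog_pos (N : ℕ) : 0 < invOneAddLog N :=
  inv_pos.2 (one_pos.trans_le (one_le_one_add_log_natCast N))

lemma invOneAddLog_le_one (N : ℕ) : invOneAddLog N ≤ 1 :=
  inv_le_one_of_one_le₀ (one_le_one_add_log_natCast N)

lemma antitone_invOneAddLog : Antitone invOneAddLog := by
  intro m n hmn
  have hlog : Real.log m ≤ Real.log n := by
    rcases Nat.eq_zero_or_pos m with rfl | hm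
    · simpa using Real.log_natCast_nonneg n
    · exact Real.log_le_log (by exact_mod_cast hm) (by exact_mod_cast hmn)
  exact inv_anti₀ (one_pos.trans_le (one_le_one_add_log_natCast m)) (by linarith)

lemma tendsto_invOneAddLog_atTop : Tendsto invOneAddLog atTop (𝓝 0) :=
  tendsto_inv_atTop_zero.comp <|
    tendsto_atTop_add_const_left _ 1 (Real.tendsto_log_atTop.comp tendsto_natCast_atTop_atTop)

lemma inv_three_mul_log_le_invOneAddLog {N : ℕ} (hN : 2 ≤ N) :
    (3 * Real.log N)⁻¹ ≤ invOneAddLog N := by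
  have hlog : Real.log 2 ≤ Real.log N := Real.log_le_log two_pos (by exact_mod_cast hN)
  have hlog2 := Real.log_two_gt_d9
  exact inv_anti₀ (one_pos.trans_le (one_le_one_add_log_natCast N)) (by linarith)

noncomputable def shrinkRadius (n N : ℕ) : ℝ := invOneAddLog N ^ ((n : ℝ)⁻¹)

lemma shrinkRadius_pos (n N : ℕ) : 0 < shrinkRadius n N :=
  Real.rpow_pos_of_pos (invOneAddLog_pos N) _

lemma shrinkRadius_le_one (n N : ℕ) : shrinkRadius n N ≤ 1 :=
  Real.rpow_le_one (invOneAddLog_pos N).le (invOneAddLog_le_one N) (by positivity)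

lemma antitone_shrinkRadius (n : ℕ) : Antitone (shrinkRadius n) := fun _ _ h =>
  Real.rpow_le_rpow (invOneAddLog_pos _).le (antitone_invOneAddLog h) (by positivity)

lemma tendsto_shrinkRadius_atTop {n : ℕ} (hn : n ≠ 0) :
    Tendsto (shrinkRadius n) atTop (𝓝 0) := by
  have h := tendsto_invOneAddLog_atTop.rpow_const (p := (n : ℝ)⁻¹) (Or.inr (by positivity))
  rwa [Real.zero_rpow (by positivity)] at h

lemma shrinkRadius_pow {n : ℕ} (hn : n ≠ 0) (N : ℕ) : shrinkRadius n N ^ n = invOneAddLog N :=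
  Real.rpow_inv_natCast_pow (invOneAddLog_pos N).le hn

section BallsThroughZero

variable {E : Type*} [NormedAddCommGroup E] [NormedSpace ℝ E] {u : E}

lemma norm_smul_of_norm_eq_one (hu : ‖u‖ = 1) (r : ℝ) : ‖r • u‖ = |r| := by
  rw [norm_smul, hu, mul_one, Real.norm_eq_abs]

lemma ball_smul_self_subset (hu : ‖u‖ = 1) {r s : ℝ} (hsr : s ≤ r) :
    ball (s • u) s ⊆ ball (r • u) r := by
  apply ball_subset_ball'
  rw [dist_eq_norm, ← sub_smul, norm_smul_of_norm_eq_one hu, abs_of_nonpos (by linarith)]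
  linarith

lemma ball_smul_self_subset_ball_zero (hu : ‖u‖ = 1) {r : ℝ} (hr : 0 ≤ r) :
    ball (r • u) r ⊆ ball 0 (2 * r) := by
  apply ball_subset_ball'
  rw [dist_zero_right, norm_smul_of_norm_eq_one hu, abs_of_nonneg hr]
  linarith

lemma zero_notMem_ball_smul_self (hu : ‖u‖ = 1) (r : ℝ) : (0 : E) ∉ ball (r • u) r := by
  rw [mem_ball, dist_comm, dist_zero_right, norm_smul_of_norm_eq_one hu, not_lt]
  exact le_abs_self r

lemma iInter_ball_smul_self_eq_empty (hu : ‖u‖ = 1) {r : ℕ → ℝ}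
    (hr : Tendsto r atTop (𝓝 0)) : ⋂ N, ball (r N • u) (r N) = ∅ := by
  refine Set.eq_empty_of_forall_notMem fun p hp => ?_
  rw [Set.mem_iInter] at hp
  have hp_small : ∀ N, ‖p‖ ≤ 2 * r N := fun N => by
    have hpN := ball_smul_self_subset_ball_zero hu (pos_of_mem_ball (hp N)).le (hp N)
    exact (mem_ball_zero_iff.1 hpN).le
  have hp0 : p = 0 := by
    have h2r : Tendsto (fun N => 2 * r N) atTop (𝓝 0) := by simpa using hr.const_mul 2
    exact norm_le_zero_iff.1 (ge_of_tendsto' h2r hp_small)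
  exact zero_notMem_ball_smul_self hu (r 0) (hp0 ▸ hp 0)

end BallsThroughZero

section Plateau

variable {α : Type*} [MeasurableSpace α] {μ : Measure α} {g : α → ℝ} {δ M : ℝ} {S : Set α}

noncomputable def addPlateau (μ : Measure α) (g : α → ℝ) (δ : ℝ) (S : Set α) : α → ℝ :=
  fun p => (1 - δ * μ.real S) * g p + S.indicator (fun _ => δ) p

lemma addPlateau_sub (p : α) :
    addPlateau μ g δ S p - g p = S.indicator (fun _ => δ) p - δ * μ.real S * g p := by
  simp only [addPlateau]; ring

lemma measurable_addPlateau (hg : Measurable g) (hS : MeasurableSet S) :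
    Measurable (addPlateau μ g δ S) :=
  (hg.const_mul _).add (measurable_const.indicator hS)

lemma integrable_indicator_const_of_measure_ne_top (hS : MeasurableSet S) (hμS : μ S ≠ ⊤) :
    Integrable (S.indicator fun _ => δ) μ :=
  (integrable_indicator_iff hS).2 (integrableOn_const hμS)

lemma integrable_addPlateau (hg : Integrable g μ) (hS : MeasurableSet S) (hμS : μ S ≠ ⊤) :
    Integrable (addPlateau μ g δ S) μ :=
  (hg.const_mul _).add (integrable_indicator_const_of_measure_ne_top hS hμS)

lemma integral_addPlateau (hg : Integrable g μ) (hg1 : ∫ p, g p ∂μ = 1) (hS : MeasurableSet S)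
    (hμS : μ S ≠ ⊤) : ∫ p, addPlateau μ g δ S p ∂μ = 1 := by
  simp only [addPlateau]
  rw [integral_add (hg.const_mul _) (integrable_indicator_const_of_measure_ne_top hS hμS),
    integral_const_mul, hg1, integral_indicator_const _ hS, smul_eq_mul]
  ring

lemma addPlateau_nonneg (hg0 : 0 ≤ g) (hδ : 0 ≤ δ) (hδS : δ * μ.real S ≤ 1) (p : α) :
    0 ≤ addPlateau μ g δ S p :=
  add_nonneg (mul_nonneg (by linarith) (hg0 p)) (Set.indicator_nonneg (fun _ _ => hδ) p)

lemma addPlateau_le (hg0 : 0 ≤ g) (hgM : ∀ p, g p ≤ M) (hδ : 0 ≤ δ) (p : α) :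
    addPlateau μ g δ S p ≤ M + δ := by
  have hind : S.indicator (fun _ => δ) p ≤ δ :=
    Set.indicator_le_self' (fun _ _ => hδ) p
  have hshift : 0 ≤ δ * μ.real S * g p := mul_nonneg (mul_nonneg hδ measureReal_nonneg) (hg0 p)
  linarith [addPlateau_sub (μ := μ) (g := g) (δ := δ) (S := S) p, hgM p]

lemma addPlateau_eq_zero {p : α} (hp : p ∉ S) (hgp : g p = 0) : addPlateau μ g δ S p = 0 := by
  simp [addPlateau, hp, hgp]

lemma integral_abs_addPlateau_sub_le (hg : Integrable g μ) (hg0 : 0 ≤ g) (hg1 : ∫ p, g p ∂μ = 1)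
    (hS : MeasurableSet S) (hμS : μ S ≠ ⊤) (hδ : 0 ≤ δ) :
    ∫ p, |addPlateau μ g δ S p - g p| ∂μ ≤ 2 * δ * μ.real S := by
  have hind := integrable_indicator_const_of_measure_ne_top (δ := δ) hS hμS
  have hpointwise : ∀ p, |addPlateau μ g δ S p - g p|
      ≤ S.indicator (fun _ => δ) p + δ * μ.real S * g p := fun p => by
    rw [addPlateau_sub]
    refine (abs_sub _ _).trans_eq ?_
    rw [abs_of_nonneg (Set.indicator_nonneg (fun _ _ => hδ) p),
      abs_of_nonneg (mul_nonneg (mul_nonneg hδ measureReal_nonneg) (hg0 p))]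
  calc ∫ p, |addPlateau μ g δ S p - g p| ∂μ
      ≤ ∫ p, (S.indicator (fun _ => δ) p + δ * μ.real S * g p) ∂μ :=
        integral_mono ((integrable_addPlateau hg hS hμS).sub hg).abs
          (hind.add (hg.const_mul _)) hpointwise
    _ = 2 * δ * μ.real S := by
        rw [integral_add hind (hg.const_mul _), integral_const_mul, hg1,
          integral_indicator_const _ hS, smul_eq_mul]
        ring

lemma addPlateau_sub_mem_Icc (hg0 : 0 ≤ g) (hgM : ∀ p, g p ≤ M) (hδ : 0 ≤ δ) {p : α}
    (hp : p ∈ S) : addPlateau μ g δ S p - g p ∈ Set.Icc (δ - δ * μ.real S * M) δ := by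
  rw [addPlateau_sub, Set.indicator_of_mem hp]
  have hδS : 0 ≤ δ * μ.real S := mul_nonneg hδ measureReal_nonneg
  constructor
  · nlinarith [hgM p]
  · nlinarith [mul_nonneg hδS (hg0 p)]

lemma iInf_addPlateau_sub_mem_Icc (hg0 : 0 ≤ g) (hgM : ∀ p, g p ≤ M) (hδ : 0 ≤ δ)
    (hS : S.Nonempty) :
    ⨅ p : S, (addPlateau μ g δ S p - g p) ∈ Set.Icc (δ - δ * μ.real S * M) δ := by
  have : Nonempty S := hS.to_subtype
  have hbdd : BddBelow (Set.range fun p : S => addPlateau μ g δ S p - g p) :=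
    ⟨δ - δ * μ.real S * M, Set.forall_mem_range.2 fun p =>
      (addPlateau_sub_mem_Icc hg0 hgM hδ p.2).1⟩
  obtain ⟨q, hq⟩ := hS
  exact ⟨le_ciInf fun p => (addPlateau_sub_mem_Icc hg0 hgM hδ p.2).1,
    (ciInf_le hbdd ⟨q, hq⟩).trans (addPlateau_sub_mem_Icc hg0 hgM hδ hq).2⟩

variable {S : ℕ → Set α}

lemma tendsto_integral_abs_addPlateau_sub (hg : Integrable g μ) (hg0 : 0 ≤ g)
    (hg1 : ∫ p, g p ∂μ = 1) (hS : ∀ N, MeasurableSet (S N)) (hμS : ∀ N, μ (S N) ≠ ⊤)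
    (hδ : 0 ≤ δ) (hS0 : Tendsto (fun N => μ.real (S N)) atTop (𝓝 0)) :
    Tendsto (fun N => ∫ p, |addPlateau μ g δ (S N) p - g p| ∂μ) atTop (𝓝 0) := by
  refine squeeze_zero (fun N => integral_nonneg fun p => abs_nonneg _)
    (fun N => integral_abs_addPlateau_sub_le hg hg0 hg1 (hS N) (hμS N) hδ) ?_
  simpa using hS0.const_mul (2 * δ)

lemma liminf_iInf_addPlateau_sub_pos (hg0 : 0 ≤ g) (hgM : ∀ p, g p ≤ M) (hδ : 0 < δ)
    (hS : ∀ N, (S N).Nonempty) (hS0 : Tendsto (fun N => μ.real (S N)) atTop (𝓝 0)) :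
    0 < liminf (fun N => ⨅ p : S N, (addPlateau μ g δ (S N) p - g p)) atTop := by
  have hbounds N := iInf_addPlateau_sub_mem_Icc (μ := μ) hg0 hgM hδ.le (hS N)
  have hlower : Tendsto (fun N => δ - δ * μ.real (S N) * M) atTop (𝓝 δ) := by
    simpa using tendsto_const_nhds.sub ((hS0.const_mul δ).mul_const M)
  calc 0 < δ := hδ
    _ = liminf (fun N => δ - δ * μ.real (S N) * M) atTop := hlower.liminf_eq.symm
    _ ≤ _ := liminf_le_liminf (Eventually.of_forall fun N => (hbounds N).1)
        hlower.isBoundedUnder_ge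
        (isBoundedUnder_of ⟨δ, fun N => (hbounds N).2⟩).isCoboundedUnder_ge

end Plateau

section HaarBalls

variable {E : Type*} [NormedAddCommGroup E] [NormedSpace ℝ E] [FiniteDimensional ℝ E]
  [MeasurableSpace E] [BorelSpace E] [Nontrivial E] (μ : Measure E) [μ.IsAddHaarMeasure]

lemma measureReal_ball_shrinkRadius (x : E) (N : ℕ) :
    μ.real (ball x (shrinkRadius (finrank ℝ E) N)) = invOneAddLog N * μ.real (ball 0 1) := by
  rw [measureReal_def, Measure.addHaar_ball_of_pos μ x (shrinkRadius_pos _ _),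
    shrinkRadius_pow finrank_pos.ne', ENNReal.toReal_mul,
    ENNReal.toReal_ofReal (invOneAddLog_pos N).le, measureReal_def]

lemma ofReal_div_log_le_measure_ball_shrinkRadius (x : E) {N : ℕ} (hN : 2 ≤ N) :
    ENNReal.ofReal (μ.real (ball 0 1) / 3 / Real.log N)
      ≤ μ (ball x (shrinkRadius (finrank ℝ E) N)) := by
  rw [← ofReal_measureReal measure_ball_lt_top.ne, measureReal_ball_shrinkRadius, div_div,
    div_eq_mul_inv, mul_comm]
  exact ENNReal.ofReal_le_ofReal
    (mul_le_mul_of_nonneg_right (inv_three_mul_log_le_invOneAddLog hN) measureReal_nonneg)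

end HaarBalls

lemma le_mul_exp_neg_half_of_le_of_eq_zero {E F : Type*} [SeminormedAddCommGroup E]
    [SeminormedAddCommGroup F] {f : E × F → ℝ} {A R : ℝ} (hA : 0 ≤ A) (hfA : ∀ p, f p ≤ A)
    (hf0 : ∀ p, R ≤ ‖p‖ → f p = 0) (p : E × F) :
    f p ≤ A * Real.exp (R ^ 2) * Real.exp (-(1 / 2) * (‖p.1‖ ^ 2 + ‖p.2‖ ^ 2)) := by
  by_cases hp : R ≤ ‖p‖
  · rw [hf0 p hp]; positivity
  have h1 : ‖p.1‖ ≤ ‖p‖ := norm_fst_le p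
  have h2 : ‖p.2‖ ≤ ‖p‖ := norm_snd_le p
  have hsq : ‖p.1‖ ^ 2 + ‖p.2‖ ^ 2 ≤ 2 * R ^ 2 := by
    nlinarith [norm_nonneg p.1, norm_nonneg p.2, norm_nonneg p]
  have hexp : 1 ≤ Real.exp (R ^ 2) * Real.exp (-(1 / 2) * (‖p.1‖ ^ 2 + ‖p.2‖ ^ 2)) := by
    rw [← Real.exp_add]
    exact Real.one_le_exp (by linarith)
  calc f p ≤ A * 1 := by linarith [hfA p]
    _ ≤ _ := by rw [mul_assoc]; exact mul_le_mul_of_nonneg_left hexp hA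

lemma addPlateau_normed_ball_smul_self_eq_zero {E : Type*} [NormedAddCommGroup E]
    [NormedSpace ℝ E] [HasContDiffBump E] [MeasurableSpace E] {μ : Measure E} {δ r : ℝ} {u p : E}
    (b : ContDiffBump (0 : E)) (hu : ‖u‖ = 1) (hr0 : 0 ≤ r) (hr : 2 * r ≤ b.rOut)
    (hp : b.rOut ≤ ‖p‖) : addPlateau μ (b.normed μ) δ (ball (r • u) r) p = 0 := by
  refine addPlateau_eq_zero (fun hpB => ?_) ?_
  · have := mem_ball_zero_iff.1 (ball_smul_self_subset_ball_zero hu hr0 hpB)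
    linarith
  · rw [b.normed_def, b.zero_of_le_dist (by rwa [dist_zero_right]), zero_div]

abbrev PhaseSpace (d : ℕ) : Type := EuclideanSpace ℝ (Fin d) × EuclideanSpace ℝ (Fin d)

instance (d : ℕ) : (volume : Measure (PhaseSpace d)).IsAddHaarMeasure :=
  Measure.prod.instIsAddHaarMeasure _ _

/-- Existence of non-uniformly-convergent example data: for every `d ≥ 1` there exist a
nonnegative Schwartz-class probability density `f₀` on `ℝ^d × ℝ^d`, a sequence of
nonnegative measurable probability densities `f_{0,N}` with a uniform Gaussian bound, and
a decreasing sequence of nonempty open balls `B_N` with empty intersection and Lebesgue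
measure at least `C (log N)⁻¹`, such that `∫ |f_{0,N} − f₀| → 0` while
`liminf_N inf_{B_N} (f_{0,N} − f₀) > 0`. -/
theorem exists_nonuniform_example (d : ℕ) (hd : 1 ≤ d) :
    ∃ (f₀ : SchwartzMap (EuclideanSpace ℝ (Fin d) × EuclideanSpace ℝ (Fin d)) ℝ)
      (f0N : ℕ → (EuclideanSpace ℝ (Fin d) × EuclideanSpace ℝ (Fin d)) → ℝ)
      (C₀ β₀ : ℝ) (c : ℕ → EuclideanSpace ℝ (Fin d) × EuclideanSpace ℝ (Fin d))
      (r : ℕ → ℝ) (C : ℝ),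
      (∀ p, 0 ≤ f₀ p) ∧ (∫ p, f₀ p) = 1 ∧
      (∀ N, Measurable (f0N N)) ∧ (∀ N p, 0 ≤ f0N N p) ∧
      (∀ N, (∫ p, f0N N p) = 1) ∧
      0 < C₀ ∧ 0 < β₀ ∧
      (∀ N p, f0N N p ≤ C₀ * Real.exp (-(β₀ / 2) * (‖p.1‖ ^ 2 + ‖p.2‖ ^ 2))) ∧
      (∀ N, 0 < r N) ∧
      (∀ N, Metric.ball (c (N + 1)) (r (N + 1)) ⊆ Metric.ball (c N) (r N)) ∧
      (⋂ N, Metric.ball (c N) (r N)) = ∅ ∧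
      0 < C ∧
      (∀ N : ℕ, 2 ≤ N → ENNReal.ofReal (C / Real.log (N : ℝ)) ≤ volume (Metric.ball (c N) (r N))) ∧
      Tendsto (fun N => ∫ p, |f0N N p - f₀ p|) atTop (nhds 0) ∧
      0 < liminf (fun N =>
        ⨅ p : Metric.ball (c N) (r N), (f0N N (p : _) - f₀ (p : _))) atTop := by
  have : NeZero d := ⟨by omega⟩
  let b : ContDiffBump (0 : PhaseSpace d) := ⟨1, 2, one_pos, one_lt_two⟩
  obtain ⟨M, hM⟩ : ∃ M, ∀ p, b.normed volume p ≤ M :=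
    ⟨_, b.normed_le_div_measure_closedBall_rIn volume⟩
  let K := volume.real (ball (0 : PhaseSpace d) 1)
  have hK : 0 < K := ENNReal.toReal_pos (measure_ball_pos _ _ one_pos).ne' measure_ball_lt_top.ne
  have hMK : 0 < M + K⁻¹ :=
    add_pos_of_nonneg_of_pos ((b.nonneg_normed 0).trans (hM 0)) (inv_pos.2 hK)
  let u : PhaseSpace d := (EuclideanSpace.single ⟨0, hd⟩ 1, 0)
  have hu : ‖u‖ = 1 := by simp [u, Prod.norm_def]
  let r := shrinkRadius (finrank ℝ (PhaseSpace d))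
  let B N := ball (r N • u) (r N)
  have hr N : 2 * r N ≤ b.rOut := by
    linarith [shrinkRadius_le_one (finrank ℝ (PhaseSpace d)) N]
  have hvolB N : volume.real (B N) = invOneAddLog N * K := measureReal_ball_shrinkRadius _ _ N
  have hB0 : Tendsto (fun N => volume.real (B N)) atTop (𝓝 0) := by
    simpa [hvolB] using tendsto_invOneAddLog_atTop.mul_const K
  have hKB N : K⁻¹ * volume.real (B N) ≤ 1 := by
    rw [hvolB, mul_comm, mul_assoc, mul_inv_cancel₀ hK.ne', mul_one]
    exact invOneAddLog_le_one N
  refine ⟨b.hasCompactSupport_normed.toSchwartzMap b.contDiff_normed,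
    fun N => addPlateau volume (b.normed volume) K⁻¹ (B N), (M + K⁻¹) * Real.exp (2 ^ 2), 1,
    fun N => r N • u, r, K / 3, b.nonneg_normed, b.integral_normed,
    fun N => measurable_addPlateau b.continuous_normed.measurable measurableSet_ball,
    fun N => addPlateau_nonneg b.nonneg_normed (inv_nonneg.2 hK.le) (hKB N),
    fun N => integral_addPlateau b.integrable_normed b.integral_normed measurableSet_ball
      measure_ball_lt_top.ne,
    mul_pos hMK (Real.exp_pos _), one_pos,
    fun N => le_mul_exp_neg_half_of_le_of_eq_zero hMK.le
      (addPlateau_le b.nonneg_normed hM (inv_nonneg.2 hK.le))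
      (fun p => addPlateau_normed_ball_smul_self_eq_zero b hu (shrinkRadius_pos _ N).le (hr N)),
    shrinkRadius_pos _, fun N => ball_smul_self_subset hu (antitone_shrinkRadius _ N.le_succ),
    iInter_ball_smul_self_eq_empty hu (tendsto_shrinkRadius_atTop finrank_pos.ne'),
    by positivity, fun N hN => ofReal_div_log_le_measure_ball_shrinkRadius volume _ hN,
    tendsto_integral_abs_addPlateau_sub b.integrable_normed b.nonneg_normed b.integral_normed
      (fun N => measurableSet_ball) (fun N => measure_ball_lt_top.ne) (inv_nonneg.2 hK.le) hB0,
    liminf_iInf_addPlateau_sub_pos b.nonneg_normed hM (inv_pos.2 hK)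
      (fun N => nonempty_ball.2 (shrinkRadius_pos _ N)) hB0⟩
end
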